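/- Let π : Σ* → G be a choice of generators for a group G, and suppose there exist a combing R ⊆ Σ* and a constant C ≥ 0 such that every R-triangle T in G has width δ(T) ≤ |T|/75 + C. Then there is a constant D with the following properties: for all g, h ∈ G, every word w ∈ Σ* of length n with π(w) = g⁻¹h, and every v₀ ∈ R with π(v₀) = g⁻¹h, (1) every point of the path of v₀ based at g is at word-metric distance at most n/36 + D from the point set of the path of w based at g; and (2) if moreover w is a geodesic (n = d(g,h)), then every point of the path of w based at g is at word-metric distance at most n/18 + 2D from the point set of the path of v₀ based at g. -/

import Mathlib

/-!
Write `n = |w|`. For the first bound, induct on `n`: cut `w` at its midpoint `m` and consider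
the `R`-triangle with sides `v₀`, a combing word from `h` to `m` and one from `m` to `g`. Its
norm is at most `n`, so each point of `v₀` is within `n/75 + C + 1` of one of the two combing
sides, and by induction these stay within `(n + 1)/72 + D` of the corresponding half of `w`.
Since `1/36 - 1/72 - 1/75 = 1/1800`, the bound `n/36 + D` propagates as soon as `n` exceeds a
threshold `N ≈ 1800 (C + 2)`; below it the combing sides are uniformly short, because balls in
the word metric are finite.

For the second bound, choose for every point `v₀(j)` a point `w(σ j)` within `c = n/36 + D`.
As `w` is a geodesic, `|σ (j + 1) - σ j| ≤ 2c + 1`, so by a discrete intermediate value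
argument every index of `w` is within `c + 1/2` of some `σ j`.
-/

/-- The image in `G` of a word over the generating alphabet, for the monoid homomorphism
`Σ* → G` determined by the letter map `φ`. -/
def wordProd {S G : Type} [Group G] (φ : S → G) (w : List S) : G :=
  (w.map φ).prod

/-- The word metric `d(g,h) = min {|w| : π(w) = g⁻¹h}` on `G`. -/
noncomputable def wdist {S G : Type} [Group G] (φ : S → G) (g h : G) : ℕ :=
  sInf {n : ℕ | ∃ w : List S, wordProd φ w = g⁻¹ * h ∧ w.length = n}

/-- The set of points of the path determined by the word `w` based at `g`. -/
def pathPoints {S G : Type} [Group G] (φ : S → G) (g : G) (w : List S) : Set G :=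
  {x | ∃ i ≤ w.length, x = g * wordProd φ (w.take i)}

/-- A triangle: three vertices joined by three words. -/
structure Tri (S G : Type) [Group G] (φ : S → G) where
  g₀ : G
  g₁ : G
  g₂ : G
  u : List S
  v : List S
  w : List S
  hu : wordProd φ u = g₀⁻¹ * g₁
  hv : wordProd φ v = g₁⁻¹ * g₂
  hw : wordProd φ w = g₂⁻¹ * g₀

/-- A triangle is `δ`-thin if every point on each side is at word-metric distance at most `δ`
from the union of the point sets of the other two sides. -/
def IsThin {S G : Type} [Group G] (φ : S → G) (δ : ℝ) (T : Tri S G φ) : Prop :=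
  (∀ p ∈ pathPoints φ T.g₀ T.u,
      ∃ q ∈ pathPoints φ T.g₁ T.v ∪ pathPoints φ T.g₂ T.w, (wdist φ p q : ℝ) ≤ δ) ∧
  (∀ p ∈ pathPoints φ T.g₁ T.v,
      ∃ q ∈ pathPoints φ T.g₀ T.u ∪ pathPoints φ T.g₂ T.w, (wdist φ p q : ℝ) ≤ δ) ∧
  (∀ p ∈ pathPoints φ T.g₂ T.w,
      ∃ q ∈ pathPoints φ T.g₀ T.u ∪ pathPoints φ T.g₁ T.v, (wdist φ p q : ℝ) ≤ δ)

/-- A triangle is geodesic if each of its three sides is a geodesic. -/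
def IsGeodesicTri {S G : Type} [Group G] (φ : S → G) (T : Tri S G φ) : Prop :=
  T.u.length = wdist φ T.g₀ T.g₁ ∧ T.v.length = wdist φ T.g₁ T.g₂ ∧
    T.w.length = wdist φ T.g₂ T.g₀

/-- `G` is word hyperbolic (with respect to the choice of generators `φ`) if all geodesic
triangles are uniformly thin. -/
def WordHyperbolic {S G : Type} [Group G] (φ : S → G) : Prop :=
  ∃ δ : ℝ, 0 ≤ δ ∧ ∀ T : Tri S G φ, IsGeodesicTri φ T → IsThin φ δ T

/-- A combing: a language projecting onto `G`. -/
def IsCombing {S G : Type} [Group G] (φ : S → G) (R : Language S) : Prop :=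
  ∀ g : G, ∃ w ∈ R, wordProd φ w = g

/-- The word `u#v#w` over `Σ ∪ {#}`, where the letter `#` is modelled by `none`. -/
def hashWord {S : Type} (u v w : List S) : List (Option S) :=
  u.map some ++ [none] ++ v.map some ++ [none] ++ w.map some

/-- The multiplication table `{u#v#w : u,v,w ∈ R, π(u)π(v)π(w) = 1}` determined by
the combing `R`. -/
def multTable {S G : Type} [Group G] (φ : S → G) (R : Language S) : Language (Option S) :=
  {z | ∃ u ∈ R, ∃ v ∈ R, ∃ w ∈ R,
    wordProd φ u * wordProd φ v * wordProd φ w = 1 ∧ z = hashWord u v w}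

/-- The width of a triangle: the smallest `δ` for which it is `δ`-thin. -/
noncomputable def triWidth {S G : Type} [Group G] (φ : S → G) (T : Tri S G φ) : ℝ :=
  sInf {δ : ℝ | IsThin φ δ T}

/-- The norm of a triangle: the maximum word-metric distance between its vertices. -/
noncomputable def triNorm {S G : Type} [Group G] (φ : S → G) (T : Tri S G φ) : ℕ :=
  max (wdist φ T.g₀ T.g₁) (max (wdist φ T.g₁ T.g₂) (wdist φ T.g₀ T.g₂))

section WordMetric

variable {S G : Type} [Group G] {φ : S → G}

@[simp]
lemma wordProd_nil : wordProd φ [] = 1 := rfl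

@[simp]
lemma wordProd_append (u v : List S) : wordProd φ (u ++ v) = wordProd φ u * wordProd φ v := by
  simp [wordProd]

lemma wdist_le_length {g h : G} {w : List S} (hw : wordProd φ w = g⁻¹ * h) :
    wdist φ g h ≤ w.length :=
  Nat.sInf_le ⟨w, hw, rfl⟩

lemma exists_length_eq_wdist (hφ : Function.Surjective (wordProd φ)) (g h : G) :
    ∃ w : List S, wordProd φ w = g⁻¹ * h ∧ w.length = wdist φ g h := by
  obtain ⟨w, hw⟩ := hφ (g⁻¹ * h)
  exact Nat.sInf_mem (s := {n | ∃ w : List S, wordProd φ w = g⁻¹ * h ∧ w.length = n})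
    ⟨w.length, w, hw, rfl⟩

lemma wdist_one_inv_mul (g h : G) : wdist φ 1 (g⁻¹ * h) = wdist φ g h := by
  simp [wdist]

lemma wdist_triangle (hφ : Function.Surjective (wordProd φ)) (a b c : G) :
    wdist φ a c ≤ wdist φ a b + wdist φ b c := by
  obtain ⟨u, hu, hul⟩ := exists_length_eq_wdist hφ a b
  obtain ⟨v, hv, hvl⟩ := exists_length_eq_wdist hφ b c
  have huv : wordProd φ (u ++ v) = a⁻¹ * c := by rw [wordProd_append, hu, hv]; group
  exact (wdist_le_length huv).trans (by simp [hul, hvl])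

lemma wdist_triangle_real (hφ : Function.Surjective (wordProd φ)) (a b c : G) :
    (wdist φ a c : ℝ) ≤ wdist φ a b + wdist φ b c := by
  exact_mod_cast wdist_triangle hφ a b c

def invWord (inv : S → S) (w : List S) : List S := (w.map inv).reverse

@[simp]
lemma length_invWord (inv : S → S) (w : List S) : (invWord inv w).length = w.length := by
  simp [invWord]

lemma wordProd_invWord {inv : S → S} (hφinv : ∀ a, φ (inv a) = (φ a)⁻¹) (w : List S) :
    wordProd φ (invWord inv w) = (wordProd φ w)⁻¹ := by
  simp [wordProd, invWord, List.prod_inv_reverse, hφinv, Function.comp_def]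

lemma wdist_comm {inv : S → S} (hφinv : ∀ a, φ (inv a) = (φ a)⁻¹)
    (hφ : Function.Surjective (wordProd φ)) (g h : G) : wdist φ g h = wdist φ h g := by
  suffices key : ∀ a b : G, wdist φ a b ≤ wdist φ b a from le_antisymm (key g h) (key h g)
  intro a b
  obtain ⟨w, hw, hl⟩ := exists_length_eq_wdist hφ b a
  have hinv : wordProd φ (invWord inv w) = a⁻¹ * b := by
    rw [wordProd_invWord hφinv, hw]; group
  simpa [hl] using wdist_le_length hinv

end WordMetric

section Paths

variable {S G : Type} [Group G] {φ : S → G}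

/-- Past the end of `w` this is the endpoint `g * wordProd φ w`. -/
def pathPoint (φ : S → G) (g : G) (w : List S) (i : ℕ) : G := g * wordProd φ (w.take i)

@[simp]
lemma pathPoint_zero (g : G) (w : List S) : pathPoint φ g w 0 = g := by
  simp [pathPoint]

lemma pathPoint_length {g h : G} {w : List S} (hw : wordProd φ w = g⁻¹ * h) :
    pathPoint φ g w w.length = h := by
  rw [pathPoint, List.take_of_length_le le_rfl, hw, mul_inv_cancel_left]

lemma wordProd_take_eq (g : G) (w : List S) (k : ℕ) :
    wordProd φ (w.take k) = g⁻¹ * pathPoint φ g w k := by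
  rw [pathPoint, inv_mul_cancel_left]

lemma wordProd_drop_eq {g h : G} {w : List S} (hw : wordProd φ w = g⁻¹ * h) (k : ℕ) :
    wordProd φ (w.drop k) = (pathPoint φ g w k)⁻¹ * h := by
  have hsplit := congrArg (wordProd φ) (List.take_append_drop k w)
  rw [wordProd_append, hw] at hsplit
  rw [pathPoint, mul_inv_rev, mul_assoc, ← hsplit, inv_mul_cancel_left]

lemma mem_pathPoints {g p : G} {w : List S} :
    p ∈ pathPoints φ g w ↔ ∃ i ≤ w.length, pathPoint φ g w i = p := by
  exact exists_congr fun _ => and_congr_right fun _ => eq_comm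

lemma pathPoint_mem_pathPoints (g : G) (w : List S) (i : ℕ) :
    pathPoint φ g w i ∈ pathPoints φ g w := by
  refine mem_pathPoints.2 ⟨min i w.length, min_le_right _ _, ?_⟩
  rw [pathPoint, pathPoint, ← List.take_take, List.take_of_length_le le_rfl]

lemma start_mem_pathPoints (g : G) (w : List S) : g ∈ pathPoints φ g w := by
  simpa using pathPoint_mem_pathPoints (φ := φ) g w 0

lemma pathPoints_take_subset (g : G) (w : List S) (k : ℕ) :
    pathPoints φ g (w.take k) ⊆ pathPoints φ g w := by
  intro p hp
  obtain ⟨i, -, rfl⟩ := mem_pathPoints.1 hp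
  rw [pathPoint, List.take_take]
  exact pathPoint_mem_pathPoints g w _

lemma pathPoints_drop_subset (g : G) (w : List S) (k : ℕ) :
    pathPoints φ (pathPoint φ g w k) (w.drop k) ⊆ pathPoints φ g w := by
  intro p hp
  obtain ⟨i, -, rfl⟩ := mem_pathPoints.1 hp
  rw [pathPoint, pathPoint, mul_assoc, ← wordProd_append, ← List.take_add]
  exact pathPoint_mem_pathPoints g w _

lemma pathPoints_invWord_subset {inv : S → S} (hφinv : ∀ a, φ (inv a) = (φ a)⁻¹) {g h : G}
    {w : List S} (hw : wordProd φ w = g⁻¹ * h) :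
    pathPoints φ h (invWord inv w) ⊆ pathPoints φ g w := by
  intro p hp
  obtain ⟨i, -, rfl⟩ := mem_pathPoints.1 hp
  have htake : (invWord inv w).take i = invWord inv (w.drop (w.length - i)) := by
    simp [invWord, List.take_reverse, List.map_drop]
  rw [pathPoint, htake, wordProd_invWord hφinv, wordProd_drop_eq hw, mul_inv_rev, inv_inv,
    mul_inv_cancel_left]
  exact pathPoint_mem_pathPoints g w _

lemma wdist_pathPoint_le (g : G) (w : List S) {a b : ℕ} (hab : a ≤ b) :
    wdist φ (pathPoint φ g w a) (pathPoint φ g w b) ≤ b - a := by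
  have hb : w.take b = w.take a ++ (w.drop a).take (b - a) := by
    rw [← List.take_add, Nat.add_sub_cancel' hab]
  refine (wdist_le_length (w := (w.drop a).take (b - a)) ?_).trans (by simp)
  rw [pathPoint, pathPoint, hb, wordProd_append]; group

end Paths

section Nearness

variable {S G : Type} [Group G] {φ : S → G}

def IsNear (φ : S → G) (A B : Set G) (r : ℝ) : Prop :=
  ∀ p ∈ A, ∃ q ∈ B, (wdist φ p q : ℝ) ≤ r

lemma IsNear.mono {A A' B B' : Set G} {r r' : ℝ} (h : IsNear φ A B r) (hA : A' ⊆ A)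
    (hB : B ⊆ B') (hr : r ≤ r') : IsNear φ A' B' r' := fun p hp =>
  let ⟨q, hq, hpq⟩ := h p (hA hp)
  ⟨q, hB hq, hpq.trans hr⟩

lemma IsNear.union {A B C : Set G} {r : ℝ} (hA : IsNear φ A C r) (hB : IsNear φ B C r) :
    IsNear φ (A ∪ B) C r := by
  rintro p (hp | hp)
  exacts [hA p hp, hB p hp]

lemma IsNear.trans (hφ : Function.Surjective (wordProd φ)) {A B C : Set G} {r s : ℝ}
    (hAB : IsNear φ A B r) (hBC : IsNear φ B C s) : IsNear φ A C (r + s) := by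
  intro p hp
  obtain ⟨q, hq, hpq⟩ := hAB p hp
  obtain ⟨x, hx, hqx⟩ := hBC q hq
  exact ⟨x, hx, (wdist_triangle_real hφ p q x).trans (add_le_add hpq hqx)⟩

lemma isNear_pathPoints_end {g h : G} {w : List S} (hw : wordProd φ w = g⁻¹ * h) :
    IsNear φ (pathPoints φ g w) {h} w.length := by
  intro p hp
  obtain ⟨i, hi, rfl⟩ := mem_pathPoints.1 hp
  refine ⟨h, rfl, ?_⟩
  have := wdist_pathPoint_le (φ := φ) g w hi
  rw [pathPoint_length hw] at this
  exact_mod_cast this.trans (Nat.sub_le _ _)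

lemma finite_ball [Finite S] (hφ : Function.Surjective (wordProd φ)) (N : ℕ) :
    {z : G | wdist φ 1 z ≤ N}.Finite := by
  refine ((List.finite_length_le S N).image (wordProd φ)).subset ?_
  intro z hz
  obtain ⟨w, hw, hl⟩ := exists_length_eq_wdist hφ 1 z
  exact ⟨w, by simpa [hl] using hz, by simpa using hw⟩

end Nearness

section Triangles

variable {S G : Type} [Group G] {φ : S → G}

lemma isThin_length (T : Tri S G φ) :
    IsThin φ ((T.u.length + T.v.length + T.w.length : ℕ) : ℝ) T :=
  ⟨(isNear_pathPoints_end T.hu).mono subset_rfl (by simp [start_mem_pathPoints])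
      (Nat.cast_le.2 (by omega)),
    (isNear_pathPoints_end T.hv).mono subset_rfl (by simp [start_mem_pathPoints])
      (Nat.cast_le.2 (by omega)),
    (isNear_pathPoints_end T.hw).mono subset_rfl (by simp [start_mem_pathPoints])
      (Nat.cast_le.2 (by omega))⟩

lemma isNear_of_triWidth_lt (T : Tri S G φ) {δ : ℝ} (h : triWidth φ T < δ) :
    IsNear φ (pathPoints φ T.g₀ T.u) (pathPoints φ T.g₁ T.v ∪ pathPoints φ T.g₂ T.w) δ := by
  obtain ⟨δ₀, hδ₀, hlt⟩ := exists_lt_of_csInf_lt (s := {δ | IsThin φ δ T}) ⟨_, isThin_length T⟩ h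
  exact IsNear.mono hδ₀.1 subset_rfl subset_rfl hlt.le

lemma isNear_of_combing_triangle {R : Language S} {C : ℝ}
    (hwidth : ∀ T : Tri S G φ, T.u ∈ R → T.v ∈ R → T.w ∈ R →
      triWidth φ T ≤ (triNorm φ T : ℝ) / 75 + C)
    {ρ : G → List S} (hρR : ∀ z, ρ z ∈ R) (hρ : ∀ z, wordProd φ (ρ z) = z)
    {g h m : G} {v : List S} (hvR : v ∈ R) (hv : wordProd φ v = g⁻¹ * h) {B : ℕ}
    (hgh : wdist φ g h ≤ B) (hhm : wdist φ h m ≤ B) (hgm : wdist φ g m ≤ B) :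
    IsNear φ (pathPoints φ g v) (pathPoints φ h (ρ (h⁻¹ * m)) ∪ pathPoints φ m (ρ (m⁻¹ * g)))
      (B / 75 + C + 1) := by
  let T : Tri S G φ := ⟨g, h, m, v, ρ (h⁻¹ * m), ρ (m⁻¹ * g), hv, hρ _, hρ _⟩
  have hnorm : (triNorm φ T : ℝ) ≤ B := Nat.cast_le.2 (max_le hgh (max_le hhm hgm))
  -- the `+ 1` is slack: the width is an infimum and need not itself be a thinness constant
  exact isNear_of_triWidth_lt T (by linarith [hwidth T hvR (hρR _) (hρR _)])

end Triangles

section Geodesics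

variable {S G : Type} [Group G] {φ : S → G}

lemma wdist_pathPoint_of_geodesic_of_le (hφ : Function.Surjective (wordProd φ)) {g h : G}
    {w : List S} (hw : wordProd φ w = g⁻¹ * h) (hgeo : w.length = wdist φ g h) {a b : ℕ}
    (hab : a ≤ b) (hb : b ≤ w.length) :
    wdist φ (pathPoint φ g w a) (pathPoint φ g w b) = b - a := by
  have hstart := wdist_pathPoint_le (φ := φ) g w (Nat.zero_le a)
  have hend := wdist_pathPoint_le (φ := φ) g w hb
  rw [pathPoint_zero] at hstart
  rw [pathPoint_length hw] at hend
  have := wdist_pathPoint_le (φ := φ) g w hab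
  have := wdist_triangle hφ g (pathPoint φ g w a) h
  have := wdist_triangle hφ (pathPoint φ g w a) (pathPoint φ g w b) h
  omega

lemma wdist_pathPoint_of_geodesic {inv : S → S} (hφinv : ∀ a, φ (inv a) = (φ a)⁻¹)
    (hφ : Function.Surjective (wordProd φ)) {g h : G} {w : List S}
    (hw : wordProd φ w = g⁻¹ * h) (hgeo : w.length = wdist φ g h) {a b : ℕ}
    (ha : a ≤ w.length) (hb : b ≤ w.length) :
    (wdist φ (pathPoint φ g w a) (pathPoint φ g w b) : ℝ) = |(a : ℝ) - b| := by
  wlog hab : a ≤ b generalizing a b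
  · rw [wdist_comm hφinv hφ, abs_sub_comm]
    exact this hb ha (le_of_not_ge hab)
  rw [wdist_pathPoint_of_geodesic_of_le hφ hw hgeo hab hb, abs_sub_comm,
    abs_of_nonneg (by simpa using hab), Nat.cast_sub hab]

lemma exists_abs_sub_le_of_abs_sub_le {f : ℕ → ℝ} {s x : ℝ} :
    ∀ {L : ℕ}, (∀ j < L, |f (j + 1) - f j| ≤ 2 * s) → f 0 - s ≤ x → x ≤ f L + s →
      ∃ j ≤ L, |x - f j| ≤ s
  | 0, _, h0, hL => ⟨0, le_rfl, abs_sub_le_iff.2 ⟨by linarith, by linarith⟩⟩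
  | L + 1, hstep, h0, hL => by
    by_cases hx : x ≤ f L + s
    · obtain ⟨j, hj, hxj⟩ := exists_abs_sub_le_of_abs_sub_le
        (fun j hj => hstep j (Nat.lt_succ_of_lt hj)) h0 hx
      exact ⟨j, Nat.le_succ_of_le hj, hxj⟩
    · have := (abs_sub_le_iff.1 (hstep L (Nat.lt_succ_self L))).1
      exact ⟨L + 1, le_rfl, abs_sub_le_iff.2 ⟨by linarith, by linarith⟩⟩

lemma abs_sub_le_of_geodesic {inv : S → S} (hφinv : ∀ a, φ (inv a) = (φ a)⁻¹)
    (hφ : Function.Surjective (wordProd φ)) {g h : G} {w : List S}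
    (hw : wordProd φ w = g⁻¹ * h) (hgeo : w.length = wdist φ g h) {a b : ℕ}
    (ha : a ≤ w.length) (hb : b ≤ w.length) (x y : G) :
    |(a : ℝ) - b| ≤
      wdist φ x (pathPoint φ g w a) + wdist φ x y + wdist φ y (pathPoint φ g w b) := by
  rw [← wdist_pathPoint_of_geodesic hφinv hφ hw hgeo ha hb, wdist_comm hφinv hφ x]
  linarith [wdist_triangle_real hφ (pathPoint φ g w a) x (pathPoint φ g w b),
    wdist_triangle_real hφ x y (pathPoint φ g w b)]

lemma IsNear.symm_of_geodesic {inv : S → S} (hφinv : ∀ a, φ (inv a) = (φ a)⁻¹)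
    (hφ : Function.Surjective (wordProd φ)) {g h : G} {w v : List S}
    (hw : wordProd φ w = g⁻¹ * h) (hgeo : w.length = wdist φ g h)
    (hv : wordProd φ v = g⁻¹ * h) {c : ℝ}
    (hnear : IsNear φ (pathPoints φ g v) (pathPoints φ g w) c) :
    IsNear φ (pathPoints φ g w) (pathPoints φ g v) (2 * c + 1 / 2) := by
  intro p hp
  obtain ⟨i, hi, rfl⟩ := mem_pathPoints.1 hp
  have hσ : ∀ j, ∃ t ≤ w.length, (wdist φ (pathPoint φ g v j) (pathPoint φ g w t) : ℝ) ≤ c :=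
    fun j => by
      obtain ⟨q, hq, hd⟩ := hnear _ (pathPoint_mem_pathPoints g v j)
      obtain ⟨t, ht, rfl⟩ := mem_pathPoints.1 hq
      exact ⟨t, ht, hd⟩
  choose σ hσw hσ using hσ
  have hdist := fun {a b : ℕ} => wdist_pathPoint_of_geodesic (a := a) (b := b) hφinv hφ hw hgeo
  have hstep : ∀ j < v.length, |(σ (j + 1) : ℝ) - σ j| ≤ 2 * (c + 1 / 2) := by
    intro j _
    have hvj : (wdist φ (pathPoint φ g v j) (pathPoint φ g v (j + 1)) : ℝ) ≤ 1 := by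
      exact_mod_cast (wdist_pathPoint_le (φ := φ) g v (Nat.le_succ j)).trans (by omega)
    rw [abs_sub_comm]
    linarith [abs_sub_le_of_geodesic hφinv hφ hw hgeo (hσw j) (hσw (j + 1))
      (pathPoint φ g v j) (pathPoint φ g v (j + 1)), hσ j, hσ (j + 1)]
  have hfirst : (σ 0 : ℝ) - (c + 1 / 2) ≤ i := by
    have := hσ 0
    rw [show pathPoint φ g v 0 = pathPoint φ g w 0 by simp, hdist (Nat.zero_le _) (hσw 0),
      Nat.cast_zero, zero_sub, abs_neg, Nat.abs_cast] at this
    linarith [(Nat.cast_nonneg i : (0 : ℝ) ≤ i)]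
  have hlast : (i : ℝ) ≤ σ v.length + (c + 1 / 2) := by
    have := hσ v.length
    rw [pathPoint_length hv, ← pathPoint_length hw, hdist le_rfl (hσw _)] at this
    have : (i : ℝ) ≤ w.length := by exact_mod_cast hi
    linarith [le_abs_self ((w.length : ℝ) - σ v.length)]
  obtain ⟨j, -, hj⟩ := exists_abs_sub_le_of_abs_sub_le (f := fun j => (σ j : ℝ)) hstep hfirst hlast
  refine ⟨_, pathPoint_mem_pathPoints g v j, ?_⟩
  have htri := wdist_triangle_real hφ (pathPoint φ g w i) (pathPoint φ g w (σ j))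
    (pathPoint φ g v j)
  rw [hdist hi (hσw j), wdist_comm hφinv hφ (pathPoint φ g w (σ j))] at htri
  linarith [hσ j]

end Geodesics

section Combing

variable {S G : Type} [Group G] {φ : S → G}

lemma isNear_pathPoints_combing_of_wdist_le {ρ : G → List S} (hρ : ∀ z, wordProd φ (ρ z) = z)
    {N K : ℕ} (hK : ∀ z, wdist φ 1 z ≤ N → (ρ z).length ≤ K) {a b : G} (hab : wdist φ a b ≤ N)
    {P : Set G} (hb : b ∈ P) : IsNear φ (pathPoints φ a (ρ (a⁻¹ * b))) P K :=
  (isNear_pathPoints_end (hρ _)).mono subset_rfl (Set.singleton_subset_iff.2 hb)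
    (by exact_mod_cast hK _ (by rwa [wdist_one_inv_mul]))

theorem isNear_pathPoints_of_mem_combing {inv : S → S} (hφinv : ∀ a, φ (inv a) = (φ a)⁻¹)
    {R : Language S} {C : ℝ}
    (hwidth : ∀ T : Tri S G φ, T.u ∈ R → T.v ∈ R → T.w ∈ R →
      triWidth φ T ≤ (triNorm φ T : ℝ) / 75 + C)
    {ρ : G → List S} (hρR : ∀ z, ρ z ∈ R) (hρ : ∀ z, wordProd φ (ρ z) = z)
    {N K : ℕ} (hK : ∀ z, wdist φ 1 z ≤ N → (ρ z).length ≤ K)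
    (hN : 1800 * (C + 2) ≤ N) (hN₂ : 2 ≤ N) {D : ℝ} (hD : N / 75 + C + 1 + K ≤ D)
    (g h : G) (w v : List S) (hw : wordProd φ w = g⁻¹ * h) (hvR : v ∈ R)
    (hv : wordProd φ v = g⁻¹ * h) :
    IsNear φ (pathPoints φ g v) (pathPoints φ g w) (w.length / 36 + D) := by
  have hφ : Function.Surjective (wordProd φ) := fun z => ⟨ρ z, hρ z⟩
  induction hn : w.length using Nat.strong_induction_on generalizing g h w v with
  | _ n IH =>
  set k := (n + 1) / 2
  set m := pathPoint φ g w k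
  have hgm : wordProd φ (w.take k) = g⁻¹ * m := wordProd_take_eq g w k
  have hmh : wordProd φ (w.drop k) = m⁻¹ * h := wordProd_drop_eq hw k
  have hgh_le : wdist φ g h ≤ n := hn ▸ wdist_le_length hw
  have hgm_le : wdist φ g m ≤ k := (wdist_le_length hgm).trans (List.length_take_le _ _)
  have hhm_le : wdist φ h m ≤ n - k := by
    rw [wdist_comm hφinv hφ]
    exact (wdist_le_length hmh).trans (by simp [hn])
  have hthin := isNear_of_combing_triangle hwidth hρR hρ hvR hv hgh_le
    (hhm_le.trans (Nat.sub_le _ _)) (hgm_le.trans (by omega))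
  by_cases hnN : n ≤ N
  · have hhm_N : wdist φ h m ≤ N := by omega
    have hmg_N : wdist φ m g ≤ N := by rw [wdist_comm hφinv hφ]; omega
    refine (hthin.trans hφ ((isNear_pathPoints_combing_of_wdist_le hρ hK hhm_N
      (pathPoint_mem_pathPoints g w k)).union (isNear_pathPoints_combing_of_wdist_le hρ hK hmg_N
      (start_mem_pathPoints g w)))).mono subset_rfl subset_rfl ?_
    have : (n : ℝ) ≤ N := by exact_mod_cast hnN
    linarith [(Nat.cast_nonneg n : (0 : ℝ) ≤ n)]
  · have hside : ∀ a b (x : List S), wordProd φ x = a⁻¹ * b → x.length < n →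
        2 * x.length ≤ n + 1 → pathPoints φ a x ⊆ pathPoints φ g w →
        IsNear φ (pathPoints φ a (ρ (a⁻¹ * b))) (pathPoints φ g w) ((n + 1) / 72 + D) := by
      intro a b x hx hlt hle hsub
      refine (IH _ hlt a b x (ρ _) hx (hρR _) (hρ _) rfl).mono subset_rfl hsub ?_
      have : (2 * x.length : ℝ) ≤ n + 1 := by exact_mod_cast hle
      linarith
    have hdrop : wordProd φ (invWord inv (w.drop k)) = h⁻¹ * m := by
      rw [wordProd_invWord hφinv, hmh]; group
    have htake : wordProd φ (invWord inv (w.take k)) = m⁻¹ * g := by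
      rw [wordProd_invWord hφinv, hgm]; group
    refine (hthin.trans hφ ((hside h m _ hdrop ?_ ?_
      ((pathPoints_invWord_subset hφinv hmh).trans (pathPoints_drop_subset g w k))).union
      (hside m g _ htake ?_ ?_
      ((pathPoints_invWord_subset hφinv hgm).trans (pathPoints_take_subset g w k))))).mono
      subset_rfl subset_rfl ?_
    all_goals try (simp only [length_invWord, List.length_drop, List.length_take, hn]; omega)
    have : (N : ℝ) < n := by exact_mod_cast not_le.1 hnN
    linarith

end Combing

theorem combing_path_close_to_path_general {S G : Type} [Fintype S] [Group G]
    (inv : S → S) (φ : S → G) (hφinv : ∀ a, φ (inv a) = (φ a)⁻¹)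
    (R : Language S) (hcomb : IsCombing φ R) (C : ℝ)
    (hwidth : ∀ T : Tri S G φ, T.u ∈ R → T.v ∈ R → T.w ∈ R →
      triWidth φ T ≤ (triNorm φ T : ℝ) / 75 + C) :
    ∃ D : ℝ, ∀ (g h : G) (w v₀ : List S),
      wordProd φ w = g⁻¹ * h → v₀ ∈ R → wordProd φ v₀ = g⁻¹ * h →
      (∀ p ∈ pathPoints φ g v₀, ∃ q ∈ pathPoints φ g w,
          (wdist φ p q : ℝ) ≤ (w.length : ℝ) / 36 + D) ∧
      (w.length = wdist φ g h →
        ∀ p ∈ pathPoints φ g w, ∃ q ∈ pathPoints φ g v₀,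
          (wdist φ p q : ℝ) ≤ (w.length : ℝ) / 18 + 2 * D) := by
  choose ρ hρR hρ using hcomb
  have hφ : Function.Surjective (wordProd φ) := fun z => ⟨ρ z, hρ z⟩
  set N := 1800 * (⌈C⌉₊ + 2)
  obtain ⟨K, hK⟩ := ((finite_ball hφ N).image fun z => (ρ z).length).bddAbove
  have hN : 1800 * (C + 2) ≤ (N : ℝ) := by
    push_cast [N]
    linarith [Nat.le_ceil C]
  have hnear := fun D : ℝ => isNear_pathPoints_of_mem_combing (D := D) hφinv hwidth hρR hρ
    (fun z hz => hK ⟨z, hz, rfl⟩) hN (by omega)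
  refine ⟨N / 75 + C + 2 + K, fun g h w v₀ hw hvR hv =>
    ⟨hnear _ (by linarith) g h w v₀ hw hvR hv, fun hgeo => ?_⟩⟩
  have hnear' := hnear (N / 75 + C + 7 / 4 + K) (by linarith) g h w v₀ hw hvR hv
  exact (hnear'.symm_of_geodesic hφinv hφ hw hgeo hv).mono subset_rfl subset_rfl (by linarith)

/-- Under the flabby-triangle hypothesis there is a constant `D` such that
any combing path `v₀ ∈ R` from `g` to `h` stays `n/36 + D`-close to any path `w` of length
`n` from `g` to `h`, and if `w` is a geodesic then `w` stays `n/18 + 2D`-close to `v₀`. -/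
theorem combing_path_close_to_path {S G : Type} [Fintype S] [Group G]
    (inv : S → S) (hinv_inv : ∀ a, inv (inv a) = a) (hinv_ne : ∀ a, inv a ≠ a)
    (φ : S → G) (hsurj : Function.Surjective (wordProd φ))
    (hφinv : ∀ a, φ (inv a) = (φ a)⁻¹)
    (R : Language S) (hcomb : IsCombing φ R) (C : ℝ) (hC : 0 ≤ C)
    (hwidth : ∀ T : Tri S G φ, T.u ∈ R → T.v ∈ R → T.w ∈ R →
      triWidth φ T ≤ (triNorm φ T : ℝ) / 75 + C) :
    ∃ D : ℝ, ∀ (g h : G) (w v₀ : List S),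
      wordProd φ w = g⁻¹ * h → v₀ ∈ R → wordProd φ v₀ = g⁻¹ * h →
      (∀ p ∈ pathPoints φ g v₀, ∃ q ∈ pathPoints φ g w,
          (wdist φ p q : ℝ) ≤ (w.length : ℝ) / 36 + D) ∧
      (w.length = wdist φ g h →
        ∀ p ∈ pathPoints φ g w, ∃ q ∈ pathPoints φ g v₀,
          (wdist φ p q : ℝ) ≤ (w.length : ℝ) / 18 + 2 * D) :=
  combing_path_close_to_path_general inv φ hφinv R hcomb C hwidth
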